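/- arXiv:2105.11991 — 9 statements merged into one kernel-verified Lean document; each statement's English description precedes it below -/
import Mathlib

section
/- For all lists bk and σ' over an alphabet A and every natural number n, the following are equivalent: (i) there exists a list σ such that σ' ⊑ σ, bk ⊑ σ, and |σ| ≤ |σ'| + n; (ii) there exists a list c such that c ⊑ bk, c ⊑ σ', and |c| + n ≥ |bk|. (Consequently, an anonymized instance with trace σ' belongs to the matching set for background knowledge bk and anonymization parameter n if and only if bk and σ' have a common subsequence of length at least |bk| − n.) -/
/-!
Both directions are the two halves of the duality between longest common subsequences and
shortest common supersequences: merging two lists along a common subsequence `c` gives a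
common supersequence of length `|a| + |b| - |c|`, and two sublists of `s` share at least
`|a| + |b| - |s|` of its positions.
-/

namespace List

variable {α : Type*}

theorem Sublist.exists_common_supersequence {a b c : List α} (hca : c <+ a) (hcb : c <+ b) :
    ∃ s, a <+ s ∧ b <+ s ∧ s.length + c.length ≤ a.length + b.length := by
  induction hca generalizing b with
  | slnil => exact ⟨b, nil_sublist b, Sublist.refl b, by simp⟩
  | @cons c a x _ ih =>
    obtain ⟨s, has, hbs, hlen⟩ := ih hcb
    exact ⟨x :: s, has.cons_cons x, hbs.cons x, by simp only [length_cons]; omega⟩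
  | @cons_cons c a x _ ih =>
    obtain ⟨r₁, r₂, rfl, hx, hcr₂⟩ := cons_sublist_iff.mp hcb
    obtain ⟨s, has, hr₂s, hlen⟩ := ih hcr₂
    refine ⟨r₁ ++ s, (singleton_sublist.mpr hx).append has, hr₂s.append_left r₁, ?_⟩
    simp only [length_cons, length_append]
    omega

theorem Sublist.exists_common_sublist {a b s : List α} (has : a <+ s) (hbs : b <+ s) :
    ∃ c, c <+ a ∧ c <+ b ∧ a.length + b.length ≤ c.length + s.length := by
  induction has generalizing b with
  | slnil => exact ⟨[], Sublist.refl [], nil_sublist b, by simpa using hbs.length_le⟩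
  | @cons a s x _ ih =>
    rcases sublist_cons_iff.mp hbs with hbs' | ⟨b', rfl, hbs'⟩
    · obtain ⟨c, hca, hcb, hlen⟩ := ih hbs'
      exact ⟨c, hca, hcb, by simp only [length_cons]; omega⟩
    · obtain ⟨c, hca, hcb, hlen⟩ := ih hbs'
      exact ⟨c, hca, hcb.cons x, by simp only [length_cons]; omega⟩
  | @cons_cons a s x _ ih =>
    rcases sublist_cons_iff.mp hbs with hbs' | ⟨b', rfl, hbs'⟩
    · obtain ⟨c, hca, hcb, hlen⟩ := ih hbs'
      exact ⟨c, hca.cons x, hcb, by simp only [length_cons]; omega⟩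
    · obtain ⟨c, hca, hcb, hlen⟩ := ih hbs'
      exact ⟨x :: c, hca.cons_cons x, hcb.cons_cons x, by simp only [length_cons]; omega⟩

end List

/-- Theorem 1 (Elements of matching sets): an anonymized trace σ' matches background
knowledge `bk` w.r.t. anonymization parameter `n` (i.e., some specialization of σ'
obtained by adding at most `n` activities contains `bk`) iff `bk` and `σ'` have a
common subsequence of length at least `|bk| - n`. -/
theorem matching_set_iff_common_subsequence {A : Type*} (bk σ' : List A) (n : ℕ) :
    (∃ σ : List A, σ'.Sublist σ ∧ bk.Sublist σ ∧ σ.length ≤ σ'.length + n) ↔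
      (∃ c : List A, c.Sublist bk ∧ c.Sublist σ' ∧ bk.length ≤ c.length + n) := by
  constructor
  · rintro ⟨σ, hσ'σ, hbkσ, hlen⟩
    obtain ⟨c, hcbk, hcσ', hclen⟩ := hbkσ.exists_common_sublist hσ'σ
    exact ⟨c, hcbk, hcσ', by omega⟩
  · rintro ⟨c, hcbk, hcσ', hlen⟩
    obtain ⟨σ, hσ'σ, hbkσ, hσlen⟩ := hcσ'.exists_common_supersequence hcbk
    exact ⟨σ, hσ'σ, hbkσ, by omega⟩
end

section
/- If lists σ1 and σ2 over an alphabet A are both subsequences of a list τ, then there exists a list c that is a common subsequence of σ1 and σ2 with |c| + |τ| ≥ |σ1| + |σ2|. -/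
/-- If σ1 and σ2 are both subsequences of τ, then they have a common subsequence c
with |c| + |τ| ≥ |σ1| + |σ2|. -/
theorem common_subsequence_of_common_supersequence {A : Type*} (σ1 σ2 τ : List A)
    (h1 : σ1.Sublist τ) (h2 : σ2.Sublist τ) :
    ∃ c : List A, c.Sublist σ1 ∧ c.Sublist σ2 ∧
      σ1.length + σ2.length ≤ c.length + τ.length := by
  induction h1 generalizing σ2 with
  | slnil => exact ⟨[], .slnil, List.nil_sublist _, by simpa using h2.length_le⟩
  | cons a _ ih =>
    -- the letter `a` is skipped by σ1, so dropping the head of σ2 costs at most one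
    obtain ⟨c, hc1, hc2, hlen⟩ := ih σ2.tail h2.tail
    refine ⟨c, hc1, hc2.trans (List.tail_sublist σ2), ?_⟩
    simp only [List.length_tail, List.length_cons] at hlen ⊢
    omega
  | cons_cons a _ ih =>
    rcases List.sublist_cons_iff.mp h2 with hskip | ⟨ρ, rfl, hρ⟩
    · obtain ⟨c, hc1, hc2, hlen⟩ := ih σ2 hskip
      exact ⟨c, hc1.cons a, hc2, by simp only [List.length_cons]; omega⟩
    · obtain ⟨c, hc1, hc2, hlen⟩ := ih ρ hρ
      exact ⟨a :: c, hc1.cons_cons a, hc2.cons_cons a, by simp only [List.length_cons]; omega⟩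
end

section
/- If c is a common subsequence of lists σ1 and σ2 over an alphabet A, then there exists a common supersequence τ of σ1 and σ2 with |τ| + |c| ≤ |σ1| + |σ2|. -/
/-!
Build `τ` by walking along both embeddings of `c` at once: a letter of `σ₁` or `σ₂` that its
embedding skips is written to `τ` on its own, while a letter of `c`, matched in both lists, is
written once. Each letter of `c` then saves exactly one position, so `|τ| + |c| = |σ₁| + |σ₂|`.
-/

namespace List

theorem Sublist.exists_common_supersequence_s2 {α : Type*} :
    ∀ {c σ₁ σ₂ : List α}, c <+ σ₁ → c <+ σ₂ →
      ∃ τ : List α, σ₁ <+ τ ∧ σ₂ <+ τ ∧ τ.length + c.length = σ₁.length + σ₂.length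
  | _, _, σ₂, .slnil, _ => ⟨σ₂, nil_sublist σ₂, .refl σ₂, by simp⟩
  | _, a :: _, _, .cons _ h₁, h₂ =>
    let ⟨τ, h₁τ, h₂τ, hτ⟩ := h₁.exists_common_supersequence_s2 h₂
    ⟨a :: τ, h₁τ.cons_cons a, h₂τ.cons a, by simp only [length_cons]; omega⟩
  | _, _, b :: _, h₁, .cons _ h₂ =>
    let ⟨τ, h₁τ, h₂τ, hτ⟩ := h₁.exists_common_supersequence_s2 h₂
    ⟨b :: τ, h₁τ.cons b, h₂τ.cons_cons b, by simp only [length_cons]; omega⟩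
  | _, a :: _, _, .cons_cons _ h₁, .cons_cons _ h₂ =>
    let ⟨τ, h₁τ, h₂τ, hτ⟩ := h₁.exists_common_supersequence_s2 h₂
    ⟨a :: τ, h₁τ.cons_cons a, h₂τ.cons_cons a, by simp only [length_cons]; omega⟩

end List

/-- If c is a common subsequence of σ1 and σ2, then there is a common supersequence τ
of σ1 and σ2 with |τ| + |c| ≤ |σ1| + |σ2|. -/
theorem common_supersequence_of_common_subsequence {A : Type*} (c σ1 σ2 : List A)
    (h1 : c.Sublist σ1) (h2 : c.Sublist σ2) :
    ∃ τ : List A, σ1.Sublist τ ∧ σ2.Sublist τ ∧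
      τ.length + c.length ≤ σ1.length + σ2.length := by
  obtain ⟨τ, h1τ, h2τ, hτ⟩ := h1.exists_common_supersequence_s2 h2
  exact ⟨τ, h1τ, h2τ, hτ.le⟩
end

section
/- For all lists σ1 and σ2 over an alphabet A, the minimum length of a common supersequence of σ1 and σ2 plus the maximum length of a common subsequence of σ1 and σ2 equals |σ1| + |σ2|. (Both extrema exist: σ1 ++ σ2 is a common supersequence, the empty list is a common subsequence, and lengths of common subsequences are bounded by min(|σ1|, |σ2|).) -/
/-!
Merging σ1 and σ2 along a common subsequence c, so that the letters of c are written only once,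
gives a common supersequence of length |σ1| + |σ2| - |c|. Conversely, in a common supersequence τ
the letters used by both embeddings form a common subsequence, and since every letter of τ is
used at most twice, there are at least |σ1| + |σ2| - |τ| of them.
-/

theorem Nat.sInf_add_sSup_eq_of_forall_exists {S C : Set ℕ} {n : ℕ} (hC : C.Nonempty)
    (hCS : ∀ c ∈ C, ∃ s ∈ S, s + c ≤ n) (hSC : ∀ s ∈ S, ∃ c ∈ C, n ≤ s + c) :
    sInf S + sSup C = n := by
  have hCbdd : BddAbove C := ⟨n, fun c hc => by obtain ⟨s, -, hsc⟩ := hCS c hc; omega⟩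
  obtain ⟨s, hs, hsn⟩ := hCS _ (Nat.sSup_mem hC hCbdd)
  have hS : S.Nonempty := ⟨s, hs⟩
  obtain ⟨c, hc, hnc⟩ := hSC _ (Nat.sInf_mem hS)
  have hsInf : sInf S ≤ s := Nat.sInf_le hs
  have hsSup : c ≤ sSup C := le_csSup hCbdd hc
  omega

namespace List

variable {A : Type*}

theorem exists_eq_append_cons_of_cons_sublist {x : A} {c σ : List A} (h : (x :: c).Sublist σ) :
    ∃ p s, σ = p ++ x :: s ∧ c.Sublist s := by
  induction σ with
  | nil => simp at h
  | cons a σ ih =>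
    rcases h with _ | h | h
    case cons h =>
      obtain ⟨p, s, rfl, hc⟩ := ih h
      exact ⟨a :: p, s, rfl, hc⟩
    case cons_cons h => exact ⟨[], σ, rfl, h⟩

theorem exists_common_supersequence_length_add_eq {c σ1 σ2 : List A} (h1 : c.Sublist σ1)
    (h2 : c.Sublist σ2) :
    ∃ τ : List A, σ1.Sublist τ ∧ σ2.Sublist τ ∧ τ.length + c.length = σ1.length + σ2.length := by
  induction c generalizing σ1 σ2 with
  | nil => exact ⟨σ1 ++ σ2, sublist_append_left _ _, sublist_append_right _ _, by simp⟩
  | cons x c ih =>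
    obtain ⟨p1, s1, rfl, hc1⟩ := exists_eq_append_cons_of_cons_sublist h1
    obtain ⟨p2, s2, rfl, hc2⟩ := exists_eq_append_cons_of_cons_sublist h2
    obtain ⟨τ, hτ1, hτ2, hlen⟩ := ih hc1 hc2
    refine ⟨p1 ++ p2 ++ x :: τ, ?_, ?_, ?_⟩
    · rw [append_assoc]
      exact (Sublist.refl p1).append ((hτ1.cons_cons x).trans (sublist_append_right p2 _))
    · rw [append_assoc]
      exact ((Sublist.refl p2).append (hτ2.cons_cons x)).trans (sublist_append_right p1 _)
    · simp only [length_append, length_cons] at hlen ⊢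
      omega

theorem exists_common_sublist_length_add_ge {τ σ1 σ2 : List A} (h1 : σ1.Sublist τ)
    (h2 : σ2.Sublist τ) :
    ∃ c : List A, c.Sublist σ1 ∧ c.Sublist σ2 ∧ σ1.length + σ2.length ≤ τ.length + c.length := by
  induction τ generalizing σ1 σ2 with
  | nil =>
    rw [sublist_nil] at h1 h2
    subst h1 h2
    exact ⟨[], Sublist.refl _, Sublist.refl _, le_rfl⟩
  | cons a τ ih =>
    rcases sublist_cons_iff.mp h1 with h1' | ⟨r1, rfl, h1'⟩ <;>
      rcases sublist_cons_iff.mp h2 with h2' | ⟨r2, rfl, h2'⟩ <;>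
      obtain ⟨c, hc1, hc2, hle⟩ := ih h1' h2'
    · exact ⟨c, hc1, hc2, by simp only [length_cons]; omega⟩
    · exact ⟨c, hc1, hc2.cons a, by simp only [length_cons] at hle ⊢; omega⟩
    · exact ⟨c, hc1.cons a, hc2, by simp only [length_cons] at hle ⊢; omega⟩
    · exact ⟨a :: c, hc1.cons_cons a, hc2.cons_cons a, by simp only [length_cons] at hle ⊢; omega⟩

end List

/-- The length of a shortest common supersequence plus the length of a longest common
subsequence of σ1 and σ2 equals |σ1| + |σ2|. -/
theorem scs_add_lcs_eq {A : Type*} (σ1 σ2 : List A) :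
    sInf {m : ℕ | ∃ τ : List A, σ1.Sublist τ ∧ σ2.Sublist τ ∧ τ.length = m} +
      sSup {m : ℕ | ∃ c : List A, c.Sublist σ1 ∧ c.Sublist σ2 ∧ c.length = m} =
      σ1.length + σ2.length := by
  refine Nat.sInf_add_sSup_eq_of_forall_exists ⟨0, [], List.nil_sublist _, List.nil_sublist _, rfl⟩ ?_ ?_
  · rintro _ ⟨c, hc1, hc2, rfl⟩
    obtain ⟨τ, hτ1, hτ2, hlen⟩ := List.exists_common_supersequence_length_add_eq hc1 hc2
    exact ⟨τ.length, ⟨τ, hτ1, hτ2, rfl⟩, hlen.le⟩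
  · rintro _ ⟨τ, hτ1, hτ2, rfl⟩
    obtain ⟨c, hc1, hc2, hlen⟩ := List.exists_common_sublist_length_add_ge hτ1 hτ2
    exact ⟨c.length, ⟨c, hc1, hc2, rfl⟩, hlen⟩
end

section
/- For all lists σ1 and σ2 over an alphabet A and every natural number m, the following are equivalent: (i) there exists a list τ such that σ2 ⊑ τ, σ1 is a prefix of τ, and |τ| ≤ |σ2| + m; (ii) there exists a list c such that c ⊑ σ1, c is a prefix of σ2, and |c| + m ≥ |σ1|. (This makes precise the prefix case of the comparability test: σ1 can be made a prefix of σ2 by adding at most m activities to σ2 iff σ1 and σ2 have a common subsequence of length at least |σ1| − m that is a prefix of σ2.) -/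
/-!
Write τ = σ1 ++ ρ. A subsequence σ2 of σ1 ++ ρ splits as c ++ d with c ⊑ σ1 and d ⊑ ρ, and
this c is the required prefix of σ2. Conversely, if σ2 = c ++ ρ with c ⊑ σ1, then σ1 ++ ρ is the
required supersequence.
-/

theorem List.exists_prefix_sublist_of_sublist_append {α : Type*} {l l₁ l₂ : List α}
    (h : l.Sublist (l₁ ++ l₂)) :
    ∃ c, c.Sublist l₁ ∧ c <+: l ∧ l.length ≤ c.length + l₂.length := by
  obtain ⟨c, d, rfl, hc, hd⟩ := List.sublist_append_iff.mp h
  refine ⟨c, hc, List.prefix_append c d, ?_⟩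
  simpa using hd.length_le

/-- Prefix case of the comparability test: σ1 can be made a prefix of σ2 by adding at
most m activities to σ2 iff σ1 and σ2 have a common subsequence of length at least
|σ1| - m that is a prefix of σ2. -/
theorem prefix_comparability_iff {A : Type*} (σ1 σ2 : List A) (m : ℕ) :
    (∃ τ : List A, σ2.Sublist τ ∧ σ1 <+: τ ∧ τ.length ≤ σ2.length + m) ↔
      (∃ c : List A, c.Sublist σ1 ∧ c <+: σ2 ∧ σ1.length ≤ c.length + m) := by
  constructor
  · rintro ⟨_, hsub, ⟨ρ, rfl⟩, hlen⟩
    obtain ⟨c, hc, hpre, hc_len⟩ := List.exists_prefix_sublist_of_sublist_append hsub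
    refine ⟨c, hc, hpre, ?_⟩
    rw [List.length_append] at hlen
    omega
  · rintro ⟨c, hc, ⟨ρ, rfl⟩, hlen⟩
    refine ⟨σ1 ++ ρ, hc.append_right ρ, List.prefix_append σ1 ρ, ?_⟩
    simp only [List.length_append]
    omega
end

section
/- Let F1 be an anonymization of a log L1 onto L1' and F2 an anonymization of a log L2 onto L2', both w.r.t. parameter n, and let h be a continuation map from L1 to L2. Let bk be a list over A and s0 ∈ S, and set g1'(s0) = {q ∈ ms(L1', n, bk) | sens(q) = s0} and g2'(s0) = {q ∈ ms(L2', n, bk) | sens(q) = s0}. Then for every p ∈ L1 with bk ⊑ trace(p) and sens(p) = s0, one has F1(p) ∈ g1'(s0) and F2(h(p)) ∈ g2'(s0); moreover the map p ↦ F2(h(p)) is injective on {p ∈ L1 | bk ⊑ trace(p) ∧ sens(p) = s0}. -/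
/-- A simple process instance: a case identifier, a trace (list of activities),
and a sensitive attribute value. -/
structure Instance (C A S : Type*) where
  caseId : C
  trace : List A
  sens : S

variable {C A S : Type*}

/-- A simple event log: a finite set of instances with pairwise distinct case ids. -/
def IsLog (L : Set (Instance C A S)) : Prop :=
  L.Finite ∧ Set.InjOn Instance.caseId L

/-- The matching set of an anonymized log `L'` for background knowledge `bk` and
anonymization parameter `n`. -/
def ms (L' : Set (Instance C A S)) (n : ℕ) (bk : List A) : Set (Instance C A S) :=
  {p' ∈ L' | ∃ σ : List A, p'.trace.Sublist σ ∧ σ.length ≤ p'.trace.length + n ∧ bk.Sublist σ}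

/-- `F` is an anonymization of the log `L` onto the log `L'` w.r.t. parameter `n`. -/
def IsAnon (n : ℕ) (F : Instance C A S → Instance C A S)
    (L L' : Set (Instance C A S)) : Prop :=
  Set.BijOn F L L' ∧
    ∀ p ∈ L, (F p).trace.Sublist p.trace ∧
      p.trace.length ≤ (F p).trace.length + n ∧ (F p).sens = p.sens

/-- `h` is a continuation map from the log `L1` to the later log `L2`. -/
def IsCont (h : Instance C A S → Instance C A S)
    (L1 L2 : Set (Instance C A S)) : Prop :=
  Set.InjOn h L1 ∧ Set.MapsTo h L1 L2 ∧
    ∀ p ∈ L1, p.trace <+: (h p).trace ∧ (h p).sens = p.sens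

/-- Instances `q1` and `q2` are comparable w.r.t. the anonymization parameter `n`. -/
def Comparable (n : ℕ) (q1 q2 : Instance C A S) : Prop :=
  q1.sens = q2.sens ∧ ∃ τ1 τ2 : List A,
    q1.trace.Sublist τ1 ∧ τ1.length ≤ q1.trace.length + n ∧
    q2.trace.Sublist τ2 ∧ τ2.length ≤ q2.trace.length + n ∧
    τ1 <+: τ2

theorem IsAnon.mem_ms {n : ℕ} {F : Instance C A S → Instance C A S}
    {L L' : Set (Instance C A S)} (hF : IsAnon n F L L') {p : Instance C A S} (hp : p ∈ L)
    {bk : List A} (hbk : bk.Sublist p.trace) : F p ∈ ms L' n bk := by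
  obtain ⟨hsub, hlen, -⟩ := hF.2 p hp
  exact ⟨hF.1.mapsTo hp, p.trace, hsub, hlen, hbk⟩

theorem IsAnon.sens_eq {n : ℕ} {F : Instance C A S → Instance C A S}
    {L L' : Set (Instance C A S)} (hF : IsAnon n F L L') {p : Instance C A S} (hp : p ∈ L) :
    (F p).sens = p.sens :=
  (hF.2 p hp).2.2

theorem IsCont.sublist_trace {h : Instance C A S → Instance C A S}
    {L1 L2 : Set (Instance C A S)} (hh : IsCont h L1 L2) {p : Instance C A S} (hp : p ∈ L1)
    {bk : List A} (hbk : bk.Sublist p.trace) : bk.Sublist (h p).trace :=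
  hbk.trans (hh.2.2 p hp).1.sublist

theorem IsCont.sens_eq {h : Instance C A S → Instance C A S}
    {L1 L2 : Set (Instance C A S)} (hh : IsCont h L1 L2) {p : Instance C A S} (hp : p ∈ L1) :
    (h p).sens = p.sens :=
  (hh.2.2 p hp).2

theorem IsCont.injOn_anon_comp {n : ℕ} {F h : Instance C A S → Instance C A S}
    {L1 L2 L2' : Set (Instance C A S)} (hF : IsAnon n F L2 L2') (hh : IsCont h L1 L2) :
    Set.InjOn (fun p => F (h p)) L1 :=
  hF.1.injOn.comp hh.1 hh.2.1

theorem group_membership_and_injectivity_general (n : ℕ)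
    (F1 F2 h : Instance C A S → Instance C A S)
    (L1 L1' L2 L2' : Set (Instance C A S))
    (hF1 : IsAnon n F1 L1 L1') (hF2 : IsAnon n F2 L2 L2')
    (hh : IsCont h L1 L2) (bk : List A) (s0 : S) :
    (∀ p ∈ L1, bk.Sublist p.trace → p.sens = s0 →
        F1 p ∈ {q ∈ ms L1' n bk | q.sens = s0} ∧
        F2 (h p) ∈ {q ∈ ms L2' n bk | q.sens = s0}) ∧
      Set.InjOn (fun p => F2 (h p)) {p ∈ L1 | bk.Sublist p.trace ∧ p.sens = s0} := by
  refine ⟨fun p hp hbk hs => ⟨⟨hF1.mem_ms hp hbk, (hF1.sens_eq hp).trans hs⟩, ?_⟩,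
    (hh.injOn_anon_comp hF2).mono fun p hp => hp.1⟩
  have hp2 : h p ∈ L2 := hh.2.1 hp
  exact ⟨hF2.mem_ms hp2 (hh.sublist_trace hp hbk),
    ((hF2.sens_eq hp2).trans (hh.sens_eq hp)).trans hs⟩

/-- Cases of `L1` matching the background knowledge and sensitive value `s0` have their
anonymizations in the groups `g1'(s0)` and `g2'(s0)` of both matching sets, and the map
`p ↦ F2 (h p)` is injective on such cases. -/
theorem group_membership_and_injectivity (n : ℕ)
    (F1 F2 h : Instance C A S → Instance C A S)
    (L1 L1' L2 L2' : Set (Instance C A S))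
    (hL1 : IsLog L1) (hL1' : IsLog L1') (hL2 : IsLog L2) (hL2' : IsLog L2')
    (hF1 : IsAnon n F1 L1 L1') (hF2 : IsAnon n F2 L2 L2')
    (hh : IsCont h L1 L2) (bk : List A) (s0 : S) :
    (∀ p ∈ L1, bk.Sublist p.trace → p.sens = s0 →
        F1 p ∈ {q ∈ ms L1' n bk | q.sens = s0} ∧
        F2 (h p) ∈ {q ∈ ms L2' n bk | q.sens = s0}) ∧
      Set.InjOn (fun p => F2 (h p)) {p ∈ L1 | bk.Sublist p.trace ∧ p.sens = s0} :=
  group_membership_and_injectivity_general n F1 F2 h L1 L1' L2 L2' hF1 hF2 hh bk s0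
end

section
/- (F-attack crack size, per group.) Let F1 be an anonymization of a log L1 onto L1' and F2 an anonymization of a log L2 onto L2', both w.r.t. parameter n, let h be a continuation map from L1 to L2, let bk be a list over A and s0 ∈ S, and set g1'(s0) = {q ∈ ms(L1', n, bk) | sens(q) = s0} and g2'(s0) = {q ∈ ms(L2', n, bk) | sens(q) = s0}. Then the number of instances p ∈ L1 with bk ⊑ trace(p) and sens(p) = s0 is at most min(|g1'(s0)|, |g2'(s0)|). Consequently, at least |g1'(s0)| − min(|g1'(s0)|, |g2'(s0)|) instances of the group g1'(s0) are anonymizations of cases of L1 whose trace does not contain bk as a subsequence. -/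
variable {C A S : Type*}

def matchingCases (L : Set (Instance C A S)) (bk : List A) (s0 : S) : Set (Instance C A S) :=
  {p ∈ L | bk.Sublist p.trace ∧ p.sens = s0}

/-- The group `g'(s0)` of the matching set. -/
def msGroup (L' : Set (Instance C A S)) (n : ℕ) (bk : List A) (s0 : S) :
    Set (Instance C A S) :=
  {q ∈ ms L' n bk | q.sens = s0}

theorem msGroup_finite {L' : Set (Instance C A S)} (hL' : L'.Finite) (n : ℕ) (bk : List A)
    (s0 : S) : (msGroup L' n bk s0).Finite :=
  hL'.subset fun _ hq => hq.1.1

namespace IsAnon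

variable {n : ℕ} {F : Instance C A S → Instance C A S} {L L' : Set (Instance C A S)}
  {bk : List A} {s0 : S}

theorem mem_ms_s9 (hF : IsAnon n F L L') {p : Instance C A S} (hp : p ∈ L)
    (hbk : bk.Sublist p.trace) : F p ∈ ms L' n bk :=
  have ⟨hsub, hlen, _⟩ := hF.2 p hp
  ⟨hF.1.mapsTo hp, p.trace, hsub, hlen, hbk⟩

theorem mapsTo_msGroup (hF : IsAnon n F L L') :
    Set.MapsTo F (matchingCases L bk s0) (msGroup L' n bk s0) :=
  fun p ⟨hp, hbk, hs⟩ => ⟨hF.mem_ms_s9 hp hbk, (hF.2 p hp).2.2.trans hs⟩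

theorem ncard_matchingCases_le (hF : IsAnon n F L L') (hL' : L'.Finite) :
    (matchingCases L bk s0).ncard ≤ (msGroup L' n bk s0).ncard :=
  Set.ncard_le_ncard_of_injOn F hF.mapsTo_msGroup (hF.1.injOn.mono fun _ hp => hp.1)
    (msGroup_finite hL' n bk s0)

theorem msGroup_subset (hF : IsAnon n F L L') :
    msGroup L' n bk s0 ⊆ F '' matchingCases L bk s0 ∪
      {q ∈ ms L' n bk | q.sens = s0 ∧ ∃ p ∈ L, F p = q ∧ ¬ bk.Sublist p.trace} := by
  rintro q ⟨hq, hs⟩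
  obtain ⟨p, hp, rfl⟩ := hF.1.surjOn hq.1
  by_cases hbk : bk.Sublist p.trace
  · exact Or.inl ⟨p, ⟨hp, hbk, (hF.2 p hp).2.2.symm.trans hs⟩, rfl⟩
  · exact Or.inr ⟨hq, hs, p, hp, rfl, hbk⟩

theorem ncard_msGroup_le (hF : IsAnon n F L L') (hL' : L'.Finite) :
    (msGroup L' n bk s0).ncard ≤ (matchingCases L bk s0).ncard +
      {q ∈ ms L' n bk | q.sens = s0 ∧ ∃ p ∈ L, F p = q ∧ ¬ bk.Sublist p.trace}.ncard :=
  calc (msGroup L' n bk s0).ncard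
      _ ≤ (F '' matchingCases L bk s0 ∪
          {q ∈ ms L' n bk | q.sens = s0 ∧ ∃ p ∈ L, F p = q ∧ ¬ bk.Sublist p.trace}).ncard :=
        Set.ncard_le_ncard hF.msGroup_subset <|
          ((msGroup_finite hL' n bk s0).subset hF.mapsTo_msGroup.image_subset).union
            (hL'.subset fun _ hq => hq.1.1)
      _ ≤ _ := Set.ncard_union_le _ _
      _ = _ := by rw [(hF.1.injOn.mono fun _ hp => hp.1 : Set.InjOn F _).ncard_image]

end IsAnon

namespace IsCont

variable {h : Instance C A S → Instance C A S} {L1 L2 : Set (Instance C A S)}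
  {bk : List A} {s0 : S}

theorem mapsTo_matchingCases (hh : IsCont h L1 L2) :
    Set.MapsTo h (matchingCases L1 bk s0) (matchingCases L2 bk s0) :=
  fun p ⟨hp, hbk, hs⟩ =>
    ⟨hh.2.1 hp, hbk.trans (hh.2.2 p hp).1.sublist, (hh.2.2 p hp).2.trans hs⟩

theorem ncard_matchingCases_le (hh : IsCont h L1 L2) (hL2 : L2.Finite) :
    (matchingCases L1 bk s0).ncard ≤ (matchingCases L2 bk s0).ncard :=
  Set.ncard_le_ncard_of_injOn h hh.mapsTo_matchingCases (hh.1.mono fun _ hp => hp.1)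
    (hL2.subset fun _ hp => hp.1)

end IsCont

theorem f_attack_crack_size_general (n : ℕ)
    (F1 F2 h : Instance C A S → Instance C A S)
    (L1 L1' L2 L2' : Set (Instance C A S))
    (hL1' : IsLog L1') (hL2 : IsLog L2) (hL2' : IsLog L2')
    (hF1 : IsAnon n F1 L1 L1') (hF2 : IsAnon n F2 L2 L2')
    (hh : IsCont h L1 L2) (bk : List A) (s0 : S) :
    ({p ∈ L1 | bk.Sublist p.trace ∧ p.sens = s0}).ncard ≤
        min ({q ∈ ms L1' n bk | q.sens = s0}).ncard
          ({q ∈ ms L2' n bk | q.sens = s0}).ncard ∧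
      ({q ∈ ms L1' n bk | q.sens = s0}).ncard -
          min ({q ∈ ms L1' n bk | q.sens = s0}).ncard
            ({q ∈ ms L2' n bk | q.sens = s0}).ncard ≤
        ({q ∈ ms L1' n bk | q.sens = s0 ∧
            ∃ p ∈ L1, F1 p = q ∧ ¬ bk.Sublist p.trace}).ncard := by
  have h1 : (matchingCases L1 bk s0).ncard ≤ (msGroup L1' n bk s0).ncard :=
    hF1.ncard_matchingCases_le hL1'.1
  have h2 : (matchingCases L1 bk s0).ncard ≤ (msGroup L2' n bk s0).ncard :=
    (hh.ncard_matchingCases_le hL2.1).trans (hF2.ncard_matchingCases_le hL2'.1)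
  have hsplit := hF1.ncard_msGroup_le (bk := bk) (s0 := s0) hL1'.1
  exact ⟨le_min h1 h2, by unfold matchingCases msGroup at *; omega⟩

/-- F-attack crack size, per group: the number of cases of `L1` matching the background
knowledge `bk` with sensitive value `s0` is at most `min |g1'(s0)| |g2'(s0)|`; hence at
least `|g1'(s0)| - min |g1'(s0)| |g2'(s0)|` instances of the group `g1'(s0)` are
anonymizations of cases of `L1` whose trace does not contain `bk`. -/
theorem f_attack_crack_size (n : ℕ)
    (F1 F2 h : Instance C A S → Instance C A S)
    (L1 L1' L2 L2' : Set (Instance C A S))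
    (hL1 : IsLog L1) (hL1' : IsLog L1') (hL2 : IsLog L2) (hL2' : IsLog L2')
    (hF1 : IsAnon n F1 L1 L1') (hF2 : IsAnon n F2 L2 L2')
    (hh : IsCont h L1 L2) (bk : List A) (s0 : S) :
    ({p ∈ L1 | bk.Sublist p.trace ∧ p.sens = s0}).ncard ≤
        min ({q ∈ ms L1' n bk | q.sens = s0}).ncard
          ({q ∈ ms L2' n bk | q.sens = s0}).ncard ∧
      ({q ∈ ms L1' n bk | q.sens = s0}).ncard -
          min ({q ∈ ms L1' n bk | q.sens = s0}).ncard
            ({q ∈ ms L2' n bk | q.sens = s0}).ncard ≤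
        ({q ∈ ms L1' n bk | q.sens = s0 ∧
            ∃ p ∈ L1, F1 p = q ∧ ¬ bk.Sublist p.trace}).ncard :=
  f_attack_crack_size_general n F1 F2 h L1 L1' L2 L2' hL1' hL2 hL2' hF1 hF2 hh bk s0
end

section
/- Let F1 be an anonymization of a log L1 onto L1' and F2 an anonymization of a log L2 onto L2', both w.r.t. parameter n, let h be a continuation map from L1 to L2, and let g2' be any subset of L2'. Define G1' = {q1 ∈ L1' | ∃ q2 ∈ g2', q1 ∼ q2} and G2' = {q2 ∈ L2' | ∃ q1 ∈ G1', q1 ∼ q2}. Then the map q ↦ F2(h(F1⁻¹(q))) is injective and maps G1' into G2'. -/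
variable {C A S : Type*}

/-!
The buddy map `q ↦ F2 (h (F1⁻¹ q))` is a composite of injections, hence injective. For the
second claim, `q = F1 p` and its image `F2 (h p)` are themselves comparable: the original
traces `p.trace` and `(h p).trace` are admissible witnesses `τ1`, `τ2`, since each
anonymization deletes at most `n` events and `h` only extends traces.
-/

section

variable {n : ℕ} {F1 F2 h F1inv : Instance C A S → Instance C A S}
  {L1 L1' L2 L2' : Set (Instance C A S)}

theorem IsAnon.comparable_of_isCont (hF1 : IsAnon n F1 L1 L1') (hF2 : IsAnon n F2 L2 L2')
    (hh : IsCont h L1 L2) {p : Instance C A S} (hp : p ∈ L1) :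
    Comparable n (F1 p) (F2 (h p)) := by
  obtain ⟨hsub1, hlen1, hsens1⟩ := hF1.2 p hp
  obtain ⟨hpre, hsens⟩ := hh.2.2 p hp
  obtain ⟨hsub2, hlen2, hsens2⟩ := hF2.2 (h p) (hh.2.1 hp)
  exact ⟨by rw [hsens1, hsens2, hsens], p.trace, (h p).trace,
    hsub1, hlen1, hsub2, hlen2, hpre⟩

theorem IsAnon.injOn_comp_isCont (hF2 : IsAnon n F2 L2 L2') (hh : IsCont h L1 L2)
    (hinv : Set.LeftInvOn F1 F1inv L1') (hmaps : Set.MapsTo F1inv L1' L1) :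
    Set.InjOn (fun q => F2 (h (F1inv q))) L1' :=
  hF2.1.injOn.comp (hh.1.comp hinv.injOn hmaps) (hh.2.1.comp hmaps)

end

theorem buddy_map_injective_into_general (n : ℕ)
    (F1 F2 h F1inv : Instance C A S → Instance C A S)
    (L1 L1' L2 L2' : Set (Instance C A S))
    (hF1 : IsAnon n F1 L1 L1') (hF2 : IsAnon n F2 L2 L2')
    (hh : IsCont h L1 L2)
    (hinv : ∀ q ∈ L1', F1inv q ∈ L1 ∧ F1 (F1inv q) = q)
    (g2' : Set (Instance C A S)) :
    Set.InjOn (fun q => F2 (h (F1inv q)))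
        {q1 ∈ L1' | ∃ q2 ∈ g2', Comparable n q1 q2} ∧
      Set.MapsTo (fun q => F2 (h (F1inv q)))
        {q1 ∈ L1' | ∃ q2 ∈ g2', Comparable n q1 q2}
        {q2 ∈ L2' | ∃ q1 ∈ {q1 ∈ L1' | ∃ q2 ∈ g2', Comparable n q1 q2},
          Comparable n q1 q2} := by
  have hmaps : Set.MapsTo F1inv L1' L1 := fun q hq => (hinv q hq).1
  have hleft : Set.LeftInvOn F1 F1inv L1' := fun q hq => (hinv q hq).2
  refine ⟨(hF2.injOn_comp_isCont hh hleft hmaps).mono fun q hq => hq.1, fun q hq => ?_⟩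
  have hcomp := hF1.comparable_of_isCont hF2 hh (hmaps hq.1)
  rw [hleft hq.1] at hcomp
  exact ⟨hF2.1.mapsTo (hh.2.1 (hmaps hq.1)), q, hq, hcomp⟩

/-- For `G1' = {q1 ∈ L1' | ∃ q2 ∈ g2', q1 ∼ q2}` and
`G2' = {q2 ∈ L2' | ∃ q1 ∈ G1', q1 ∼ q2}`, the map `q ↦ F2 (h (F1⁻¹ q))` is injective
on `G1'` and maps `G1'` into `G2'`. Here `F1inv` is the inverse of the bijection `F1`
on `L1'`. -/
theorem buddy_map_injective_into (n : ℕ)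
    (F1 F2 h F1inv : Instance C A S → Instance C A S)
    (L1 L1' L2 L2' : Set (Instance C A S))
    (hL1 : IsLog L1) (hL1' : IsLog L1') (hL2 : IsLog L2) (hL2' : IsLog L2')
    (hF1 : IsAnon n F1 L1 L1') (hF2 : IsAnon n F2 L2 L2')
    (hh : IsCont h L1 L2)
    (hinv : ∀ q ∈ L1', F1inv q ∈ L1 ∧ F1 (F1inv q) = q)
    (g2' : Set (Instance C A S)) (hg2' : g2' ⊆ L2') :
    Set.InjOn (fun q => F2 (h (F1inv q)))
        {q1 ∈ L1' | ∃ q2 ∈ g2', Comparable n q1 q2} ∧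
      Set.MapsTo (fun q => F2 (h (F1inv q)))
        {q1 ∈ L1' | ∃ q2 ∈ g2', Comparable n q1 q2}
        {q2 ∈ L2' | ∃ q1 ∈ {q1 ∈ L1' | ∃ q2 ∈ g2', Comparable n q1 q2},
          Comparable n q1 q2} :=
  buddy_map_injective_into_general n F1 F2 h F1inv L1 L1' L2 L2' hF1 hF2 hh hinv g2'
end

section
/- (B-attack crack size.) Let F1 be an anonymization of a log L1 onto L1' and F2 an anonymization of a log L2 onto L2', both w.r.t. parameter n, let h be a continuation map from L1 to L2, let bk be a list over A, and let g2' be a subset of the matching set ms(L2', n, bk) all of whose members have the same sensitive value (a group). Define G1' = {q1 ∈ L1' | ∃ q2 ∈ g2', q1 ∼ q2} and G2' = {q2 ∈ L2' | ∃ q1 ∈ G1', q1 ∼ q2}, and assume g2' ⊆ G2'. Then the number of instances q ∈ g2' of the form q = F2(h(p)) for some p ∈ L1 (i.e., anonymizations of continuations of cases already present at time t1) is at least |G1'| − (|G2'| − |g2'|). Consequently, for a victim case known to have started after time t1, at least |G1'| − (|G2'| − |g2'|) instances of g2' can be excluded from the set of candidates. -/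
variable {C A S : Type*}

theorem ncard_le_ncard_sub_add_of_subset_diff_union {α : Type*} {s t u k : Set α}
    (hs : s ⊆ t \ u ∪ k) (hu : u ⊆ t) (ht : t.Finite) (hk : k.Finite) :
    s.ncard ≤ t.ncard - u.ncard + k.ncard :=
  calc s.ncard ≤ (t \ u ∪ k).ncard := Set.ncard_le_ncard hs (ht.sdiff.union hk)
    _ ≤ (t \ u).ncard + k.ncard := Set.ncard_union_le _ _
    _ = t.ncard - u.ncard + k.ncard := by rw [Set.ncard_sdiff hu (ht.subset hu)]

theorem IsCont.comparable_anon {n : ℕ} {F1 F2 h : Instance C A S → Instance C A S}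
    {L1 L1' L2 L2' : Set (Instance C A S)} (hF1 : IsAnon n F1 L1 L1')
    (hF2 : IsAnon n F2 L2 L2') (hh : IsCont h L1 L2) {p : Instance C A S} (hp : p ∈ L1) :
    Comparable n (F1 p) (F2 (h p)) := by
  obtain ⟨hsub1, hlen1, hsens1⟩ := hF1.2 p hp
  obtain ⟨hsub2, hlen2, hsens2⟩ := hF2.2 (h p) (hh.2.1 hp)
  obtain ⟨hprefix, hsens⟩ := hh.2.2 p hp
  exact ⟨by rw [hsens1, hsens2, hsens], p.trace, (h p).trace,
    hsub1, hlen1, hsub2, hlen2, hprefix⟩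

theorem b_attack_crack_size_general (n : ℕ)
    (F1 F2 h : Instance C A S → Instance C A S)
    (L1 L1' L2 L2' : Set (Instance C A S))
    (hL2' : IsLog L2')
    (hF1 : IsAnon n F1 L1 L1') (hF2 : IsAnon n F2 L2 L2')
    (hh : IsCont h L1 L2)
    (g2' : Set (Instance C A S))
    (hg2G2 : g2' ⊆ {q2 ∈ L2' | ∃ q1 ∈ {q1 ∈ L1' | ∃ q2 ∈ g2', Comparable n q1 q2},
      Comparable n q1 q2}) :
    ({q1 ∈ L1' | ∃ q2 ∈ g2', Comparable n q1 q2}).ncard -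
        (({q2 ∈ L2' | ∃ q1 ∈ {q1 ∈ L1' | ∃ q2 ∈ g2', Comparable n q1 q2},
            Comparable n q1 q2}).ncard - g2'.ncard) ≤
      ({q ∈ g2' | ∃ p ∈ L1, F2 (h p) = q}).ncard := by
  set G1 := {q1 ∈ L1' | ∃ q2 ∈ g2', Comparable n q1 q2}
  set G2 := {q2 ∈ L2' | ∃ q1 ∈ G1, Comparable n q1 q2}
  set K := {q ∈ g2' | ∃ p ∈ L1, F2 (h p) = q}
  set P := {p ∈ L1 | F1 p ∈ G1}
  have hG1 : F1 '' P = G1 := by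
    refine Set.Subset.antisymm (Set.image_subset_iff.2 fun p hp ↦ hp.2) fun q hq ↦ ?_
    obtain ⟨p, hp, rfl⟩ := hF1.1.image_eq.symm ▸ hq.1
    exact ⟨p, ⟨hp, hq⟩, rfl⟩
  have hcard : G1.ncard = ((F2 ∘ h) '' P).ncard := by
    rw [← hG1, (hF1.1.injOn.mono (Set.sep_subset _ _)).ncard_image,
      ((hF2.1.injOn.comp hh.1 hh.2.1).mono (Set.sep_subset _ _)).ncard_image]
  have hmaps : (F2 ∘ h) '' P ⊆ G2 \ g2' ∪ K := by
    rintro _ ⟨p, ⟨hp, hpG1⟩, rfl⟩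
    by_cases hg : F2 (h p) ∈ g2'
    · exact Or.inr ⟨hg, p, hp, rfl⟩
    · exact Or.inl ⟨⟨hF2.1.mapsTo (hh.2.1 hp), F1 p, hpG1,
        hh.comparable_anon hF1 hF2 hp⟩, hg⟩
  have hG2 : G2.Finite := hL2'.1.subset (Set.sep_subset _ _)
  have hle := ncard_le_ncard_sub_add_of_subset_diff_union hmaps hg2G2 hG2
    ((hG2.subset hg2G2).subset (Set.sep_subset _ _))
  omega

/-- B-attack crack size: for a group `g2'` of the matching set of `L2'` (all members
sharing the sensitive value `s0`), with `G1' = {q1 ∈ L1' | ∃ q2 ∈ g2', q1 ∼ q2}` and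
`G2' = {q2 ∈ L2' | ∃ q1 ∈ G1', q1 ∼ q2}` and `g2' ⊆ G2'`, at least
`|G1'| - (|G2'| - |g2'|)` instances of `g2'` are anonymizations of continuations of
cases already present at time `t1`, i.e., of the form `F2 (h p)` with `p ∈ L1`. -/
theorem b_attack_crack_size (n : ℕ)
    (F1 F2 h : Instance C A S → Instance C A S)
    (L1 L1' L2 L2' : Set (Instance C A S))
    (hL1 : IsLog L1) (hL1' : IsLog L1') (hL2 : IsLog L2) (hL2' : IsLog L2')
    (hF1 : IsAnon n F1 L1 L1') (hF2 : IsAnon n F2 L2 L2')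
    (hh : IsCont h L1 L2) (bk : List A) (s0 : S)
    (g2' : Set (Instance C A S))
    (hg2ms : g2' ⊆ ms L2' n bk) (hg2s : ∀ q ∈ g2', q.sens = s0)
    (hg2G2 : g2' ⊆ {q2 ∈ L2' | ∃ q1 ∈ {q1 ∈ L1' | ∃ q2 ∈ g2', Comparable n q1 q2},
      Comparable n q1 q2}) :
    ({q1 ∈ L1' | ∃ q2 ∈ g2', Comparable n q1 q2}).ncard -
        (({q2 ∈ L2' | ∃ q1 ∈ {q1 ∈ L1' | ∃ q2 ∈ g2', Comparable n q1 q2},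
            Comparable n q1 q2}).ncard - g2'.ncard) ≤
      ({q ∈ g2' | ∃ p ∈ L1, F2 (h p) = q}).ncard :=
  b_attack_crack_size_general n F1 F2 h L1 L1' L2 L2' hL2' hF1 hF2 hh g2' hg2G2
end
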